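/- Let R be a strongly connected relation on a finite set X with period q and eventual period p. Then the identity relation id_X is contained in R^{p+q}, i.e., x ∈ R^{p+q}(x) for every x ∈ X. -/

import Mathlib

/-- The `n`-th power of a relation (`R^0 = id`). -/
def relPow {X : Type*} (R : Rel X X) : ℕ → Rel X X
  | 0 => fun x y => x = y
  | n + 1 => fun x z => ∃ y, relPow R n x y ∧ R y z

/-- A relation is strongly connected if any two points are joined by a walk of
positive length. -/
def StronglyConnectedRel {X : Type*} (R : Rel X X) : Prop :=
  ∀ x y : X, ∃ n : ℕ, 1 ≤ n ∧ relPow R n x y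

/-- `q` is the period of `R`: the greatest common divisor of the lengths of all
cycles (closed walks of positive length) in the digraph `(X, R)`. -/
def IsPeriodOf {X : Type*} (R : Rel X X) (q : ℕ) : Prop :=
  (∀ n : ℕ, 1 ≤ n → (∃ x, relPow R n x x) → q ∣ n) ∧
    ∀ d : ℕ, (∀ n : ℕ, 1 ≤ n → (∃ x, relPow R n x x) → d ∣ n) → d ∣ q

/-- `p` is an eventual period of `R`. -/
def IsEventualPeriod {X : Type*} (R : Rel X X) (p : ℕ) : Prop :=
  1 ≤ p ∧ ∀ i ≥ p, relPow R (i + p) = relPow R i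

lemma relPow_comp' {X : Type*} (R : Rel X X) (m n : ℕ) {x y z : X}
    (h1 : relPow R m x y) (h2 : relPow R n y z) : relPow R (m + n) x z := by
  induction n generalizing z with
  | zero =>
    have hz : y = z := h2
    subst hz; exact h1
  | succ n ih =>
    obtain ⟨w, hw, hwz⟩ := h2
    exact ⟨w, ih hw, hwz⟩

lemma relPow_nsmul {X : Type*} (R : Rel X X) {n : ℕ} {x : X}
    (h : relPow R n x x) : ∀ k : ℕ, relPow R (k * n) x x := by
  intro k
  induction k with
  | zero => rw [Nat.zero_mul]; exact rfl
  | succ k ih =>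
    have := relPow_comp' R (k * n) n ih h
    simpa [Nat.succ_mul] using this

theorem id_subset_pow_add_period {X : Type*} [Finite X] (R : Rel X X)
    (hconn : StronglyConnectedRel R) (q p : ℕ) (hq1 : 1 ≤ q) (hq : IsPeriodOf R q)
    (hp : IsEventualPeriod R p) :
    ∀ x : X, relPow R (p + q) x x := by
  obtain ⟨hp1, hp2⟩ := hp
  obtain ⟨hq2, hqmax⟩ := hq
  -- reduction lemma: adding multiples of p above level p does not change the power
  have hred : ∀ t i, p ≤ i → relPow R (i + t * p) = relPow R i := by
    intro t
    induction t with
    | zero => simp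
    | succ t ih =>
      intro i hi
      have h1 : i + (t + 1) * p = (i + t * p) + p := by ring
      rw [h1, hp2 _ (le_trans hi (Nat.le_add_right _ _)), ih i hi]
  intro x
  obtain ⟨n0, hn01, hn0⟩ := hconn x x
  -- q divides p
  have hcyc_pn0 : relPow R (p * n0) x x := relPow_nsmul R hn0 p
  have hpn0_pos : 1 ≤ p * n0 := Nat.one_le_iff_ne_zero.mpr (by positivity)
  have hpn0_ge : p ≤ p * n0 := Nat.le_mul_of_pos_right p hn01
  have hqp : q ∣ p := by
    have h1 : q ∣ p * n0 := hq2 _ hpn0_pos ⟨x, hcyc_pn0⟩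
    have hcy2 : relPow R (p * n0 + p) x x := by
      rw [hp2 (p * n0) hpn0_ge]; exact hcyc_pn0
    have h2 : q ∣ p * n0 + p := hq2 _ (by omega) ⟨x, hcy2⟩
    have := Nat.dvd_sub h2 h1
    simpa using this
  have hqlep : q ≤ p := Nat.le_of_dvd (by omega) hqp
  -- the set of (lengths of) cycles at x, as integers, together with p
  set S : Set ℤ := {z | ∃ n : ℕ, (0 < n ∧ relPow R n x x) ∧ (n : ℤ) = z} with hS
  set G : AddSubgroup ℤ := AddSubgroup.closure (insert (p : ℤ) S) with hG
  obtain ⟨g, hg⟩ := Int.subgroup_cyclic G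
  have hdvdG : ∀ z ∈ G, g ∣ z := by
    intro z hz
    rw [hg, AddSubgroup.mem_closure_singleton] at hz
    obtain ⟨k, hk⟩ := hz
    exact ⟨k, by rw [← hk, smul_eq_mul]; ring⟩
  set d : ℕ := g.natAbs with hd
  have hdG : (d : ℤ) ∈ G := by
    have hgG : g ∈ G := by
      rw [hg]; exact AddSubgroup.mem_closure_singleton_self g
    rcases Int.natAbs_eq g with h | h
    · rw [hd, ← h]; exact hgG
    · rw [hd]
      have : (g.natAbs : ℤ) = -g := by omega
      rw [this]; exact neg_mem hgG
  have hdvd_d : ∀ z ∈ G, (d : ℤ) ∣ z := fun z hz =>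
    (Int.natAbs_dvd).mpr (hdvdG z hz)
  -- cycles at x are in G, and p is in G
  have hmemS : ∀ n : ℕ, 0 < n → relPow R n x x → (n : ℤ) ∈ G :=
    fun n h1 h2 => AddSubgroup.subset_closure (Set.mem_insert_of_mem _ ⟨n, ⟨h1, h2⟩, rfl⟩)
  have hpG : (p : ℤ) ∈ G := AddSubgroup.subset_closure (Set.mem_insert _ _)
  -- d divides every cycle length at x, and d divides p
  have hd_dvd_cycle : ∀ n : ℕ, 0 < n → relPow R n x x → d ∣ n := by
    intro n h1 h2
    exact_mod_cast hdvd_d _ (hmemS n h1 h2)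
  have hd_dvd_p : d ∣ p := by exact_mod_cast hdvd_d _ hpG
  -- key: every element of G is congruent mod p to a cycle length at x
  have key : ∀ z ∈ G, ∃ n : ℕ, (0 < n ∧ relPow R n x x) ∧ (p : ℤ) ∣ (n : ℤ) - z := by
    intro z hz
    rw [hG] at hz
    induction hz using AddSubgroup.closure_induction with
    | mem w hw =>
      rcases hw with h | h
      · exact ⟨p * n0, ⟨by omega, hcyc_pn0⟩, by rw [h]; push_cast; exact ⟨n0 - 1, by ring⟩⟩
      · obtain ⟨n, hn, hnz⟩ := h
        exact ⟨n, hn, by rw [hnz]; simp⟩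
    | zero => exact ⟨p * n0, ⟨by omega, hcyc_pn0⟩, by push_cast; exact ⟨n0, by ring⟩⟩
    | add a b ha hb iha ihb =>
      obtain ⟨n1, ⟨hn1pos, hn1cyc⟩, hn1⟩ := iha
      obtain ⟨n2, ⟨hn2pos, hn2cyc⟩, hn2⟩ := ihb
      refine ⟨n1 + n2, ⟨by omega, relPow_comp' R n1 n2 hn1cyc hn2cyc⟩, ?_⟩
      have : ((n1 + n2 : ℕ) : ℤ) - (a + b) = ((n1 : ℤ) - a) + ((n2 : ℤ) - b) := by
        push_cast; ring
      rw [this]; exact dvd_add hn1 hn2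
    | neg a ha iha =>
      obtain ⟨n, ⟨hnpos, hncyc⟩, hn⟩ := iha
      refine ⟨(2 * p - 1) * n, ⟨Nat.mul_pos (by omega) hnpos, relPow_nsmul R hncyc _⟩, ?_⟩
      obtain ⟨c, hc⟩ := hn
      have hcast : (((2 * p - 1) * n : ℕ) : ℤ) = (2 * p - 1) * n := by
        push_cast [Nat.cast_sub (by omega : 1 ≤ 2 * p)]; ring
      rw [hcast]
      exact ⟨2 * n - c, by linarith [hc]⟩
  -- apply to d itself
  obtain ⟨n, ⟨hnpos, hncyc⟩, hnd⟩ := key _ hdG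
  -- d is positive
  have hdpos : 0 < d := by
    rcases Nat.eq_zero_or_pos d with h | h
    · exfalso
      have := hdvd_d _ (hmemS n0 (by omega) hn0)
      rw [h] at this
      simp at this
      omega
    · exact h
  -- d divides q
  have hd_dvd_q : d ∣ q := by
    apply hqmax
    intro m hm ⟨y, hy⟩
    obtain ⟨r, hr1, hr⟩ := hconn x y
    obtain ⟨s, hs1, hs⟩ := hconn y x
    have c1 : relPow R (r + s) x x := relPow_comp' R r s hr hs
    have c2 : relPow R (r + m + s) x x :=
      relPow_comp' R (r + m) s (relPow_comp' R r m hr hy) hs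
    have d1 : d ∣ r + s := hd_dvd_cycle _ (by omega) c1
    have d2 : d ∣ r + m + s := hd_dvd_cycle _ (by omega) c2
    have := Nat.dvd_sub d2 d1
    have heq : r + m + s - (r + s) = m := by omega
    rwa [heq] at this
  -- q divides d, hence d = q
  have hq_dvd_d : q ∣ d := by
    have h1 : (q : ℤ) ∣ (n : ℤ) := Int.natCast_dvd_natCast.mpr (hq2 n (by omega) ⟨x, hncyc⟩)
    have h2 : (q : ℤ) ∣ (n : ℤ) - d := dvd_trans (Int.natCast_dvd_natCast.mpr hqp) hnd
    have : (q : ℤ) ∣ (d : ℤ) := by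
      have := dvd_sub h1 h2
      simpa using this
    exact_mod_cast this
  have hdq : d = q := Nat.dvd_antisymm hd_dvd_q hq_dvd_d
  rw [hdq] at hnd
  -- build a big cycle N ≡ q (mod p), N ≥ q + p
  set N : ℕ := n + 2 * p * n0 with hN
  have hNcyc : relPow R N x x := relPow_comp' R n (2 * p * n0) hncyc (by
    have := relPow_nsmul R hn0 (2 * p)
    simpa using this)
  have hNgeq : q + p + 1 ≤ N := by
    have : p * n0 ≥ p := hpn0_ge
    have h2 : 2 * p * n0 = 2 * (p * n0) := by ring
    omega
  have hqleN : q ≤ N := by omega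
  have hdvdN : p ∣ N - q := by
    have hz : (p : ℤ) ∣ (N : ℤ) - q := by
      have : (N : ℤ) - q = ((n : ℤ) - q) + p * (2 * n0) := by
        rw [hN]; push_cast; ring
      rw [this]
      exact dvd_add hnd ⟨2 * n0, rfl⟩
    have hcast : ((N - q : ℕ) : ℤ) = (N : ℤ) - q := by
      rw [Nat.cast_sub hqleN]
    exact_mod_cast hcast ▸ hz
  obtain ⟨s, hs⟩ := hdvdN
  rcases s with _ | s
  · simp at hs; omega
  · have hs' : N = p * (s + 1) + q := (Nat.sub_eq_iff_eq_add hqleN).mp hs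
    have hNeq : N = (q + p) + s * p := by rw [hs']; ring
    rw [hNeq] at hNcyc
    rw [hred s (q + p) (by omega)] at hNcyc
    have : p + q = q + p := by ring
    rw [this]
    exact hNcyc
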